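/- Let ε > 0, ρ > 0, and k ≥ 1. Let Q = {q_1,…,q_k} be a set of k centers with c(P,Q) = opt(P,k), let {P_1,…,P_k} be the induced partition of P (each p ∈ P_i has q_i among its closest centers in Q) with every P_i nonempty, and for each i let μ_i ∈ ℝ^d attain opt(P_i,1), i.e., c(P_i,{μ_i}) = opt(P_i,1). Suppose opt(P,k) − opt(P,2k) ≤ w_min·(ε/ρ)^z. Then for every set X of models and every per-point cost function cost : ℝ^d × X → ℝ satisfying (i) cost(p,x) ≥ 1 for all p ∈ ℝ^d and x ∈ X, and (ii) cost is ρ-Lipschitz in the point argument, the set S = {μ_1,…,μ_k} with weights u_i := Σ_{p∈P_i} w_p is an ε-coreset for P w.r.t. the sum cost, and S (with arbitrary weights) is an ε-coreset for P w.r.t. the maximum cost. (Theorem 1) -/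

import Mathlib

/-!
Fix an optimal `k`-clustering `Q` and a point `p₀` of `P`, lying in the cluster of `qᵢ`. Replacing
`qᵢ` by the optimal `1`-center `μᵢ` of that cluster does not increase the cost, and adding `p₀`
itself as a center saves at least `w_{p₀} ‖p₀ - μᵢ‖^z`. The resulting set has at most `k + 1 ≤ 2k`
centers, so `w_min ‖p₀ - μᵢ‖^z ≤ opt(P,k) - opt(P,2k) ≤ w_min (ε/ρ)^z`, i.e. every point lies within
`ε/ρ` of the `1`-center of its cluster. By the Lipschitz bound its cost then differs from that of
the center by at most `ε`, which is at most `ε` times the cost itself, since costs are `≥ 1`.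
Summing, resp. maximizing, over `P` gives both coreset guarantees.
-/

open scoped Classical

/-- Points of `ℝ^d` with the Euclidean norm. -/
abbrev Pt (d : ℕ) := EuclideanSpace ℝ (Fin d)

/-- Weighted clustering cost `c(P,Q) = Σ_{p∈P} w_p · (min_{q∈Q} ‖p−q‖)^z`
(the minimum is expressed as an infimum, which agrees with the minimum
for nonempty finite `Q`). -/
noncomputable def cCost {d : ℕ} (z : ℝ) (w : Pt d → ℝ) (P Q : Finset (Pt d)) : ℝ :=
  ∑ p ∈ P, w p * (sInf ((fun q => dist p q) '' (Q : Set (Pt d)))) ^ z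

/-- Optimal `k`-clustering cost `opt(P,k) = inf { c(P,Q) : |Q| = k }`. -/
noncomputable def optCost {d : ℕ} (z : ℝ) (w : Pt d → ℝ) (P : Finset (Pt d)) (k : ℕ) : ℝ :=
  sInf { r : ℝ | ∃ Q : Finset (Pt d), Q.card = k ∧ r = cCost z w P Q }

open Finset

def RelApprox (ε a b : ℝ) : Prop :=
  (1 - ε) * a ≤ b ∧ b ≤ (1 + ε) * a

namespace RelApprox

variable {ε : ℝ}

theorem of_abs_sub_le {a b : ℝ} (ha : 1 ≤ a) (hε : 0 ≤ ε) (h : |a - b| ≤ ε) :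
    RelApprox ε a b := by
  have hεa : ε ≤ ε * a := le_mul_of_one_le_right hε ha
  constructor <;> linarith [abs_le.1 h]

theorem sum {α : Type*} {s : Finset α} {w a b : α → ℝ} (hw : ∀ p ∈ s, 0 ≤ w p)
    (h : ∀ p ∈ s, RelApprox ε (a p) (b p)) :
    RelApprox ε (∑ p ∈ s, w p * a p) (∑ p ∈ s, w p * b p) := by
  simp only [RelApprox, mul_sum]
  constructor <;> refine sum_le_sum fun p hp => ?_
  all_goals rw [mul_left_comm]
  · exact mul_le_mul_of_nonneg_left (h p hp).1 (hw p hp)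
  · exact mul_le_mul_of_nonneg_left (h p hp).2 (hw p hp)

theorem sup' {α ι : Type*} {s : Finset α} {t : Finset ι} (hs : s.Nonempty) (ht : t.Nonempty)
    {f : α → ι} (hf : ∀ p ∈ s, f p ∈ t) (hf' : ∀ i ∈ t, ∃ p ∈ s, f p = i) {a : α → ℝ}
    {b : ι → ℝ} (hε : 0 ≤ 1 + ε) (h : ∀ p ∈ s, RelApprox ε (a p) (b (f p))) :
    RelApprox ε (s.sup' hs a) (t.sup' ht b) := by
  constructor
  · obtain ⟨p, hp, hmax⟩ := exists_mem_eq_sup' hs a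
    rw [hmax]
    exact (h p hp).1.trans (le_sup' b (hf p hp))
  · refine sup'_le _ _ fun i hi => ?_
    obtain ⟨p, hp, rfl⟩ := hf' i hi
    exact (h p hp).2.trans (mul_le_mul_of_nonneg_left (le_sup' a hp) hε)

end RelApprox

theorem sum_sum_filter_mul {α ι : Type*} [Fintype ι] [DecidableEq ι] (s : Finset α) (f : α → ι)
    (w : α → ℝ) (b : ι → ℝ) :
    ∑ i, (∑ p ∈ s.filter (fun p => f p = i), w p) * b i = ∑ p ∈ s, w p * b (f p) := by
  simp only [sum_mul]
  rw [← sum_fiberwise s f (fun p => w p * b (f p))]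
  refine sum_congr rfl fun i _ => sum_congr rfl fun p hp => ?_
  rw [(mem_filter.1 hp).2]

section Clustering

variable {d : ℕ} {z : ℝ} {w : Pt d → ℝ} {P : Finset (Pt d)}

theorem bddBelow_dist_image (p : Pt d) (Q : Set (Pt d)) : BddBelow ((fun q => dist p q) '' Q) :=
  ⟨0, by rintro r ⟨q, -, rfl⟩; exact dist_nonneg⟩

theorem sInf_dist_image_nonneg (p : Pt d) (Q : Set (Pt d)) :
    0 ≤ sInf ((fun q => dist p q) '' Q) :=
  Real.sInf_nonneg (by rintro r ⟨q, -, rfl⟩; exact dist_nonneg)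

theorem cCost_nonneg (hw : ∀ p ∈ P, 0 ≤ w p) (Q : Finset (Pt d)) : 0 ≤ cCost z w P Q :=
  sum_nonneg fun p hp => mul_nonneg (hw p hp) (Real.rpow_nonneg (sInf_dist_image_nonneg p _) z)

theorem cCost_singleton (c : Pt d) : cCost z w P {c} = ∑ p ∈ P, w p * dist p c ^ z := by
  simp [cCost]

theorem optCost_le_cCost (hw : ∀ p ∈ P, 0 ≤ w p) {Q : Finset (Pt d)} {n : ℕ}
    (hQ : Q.card = n) : optCost z w P n ≤ cCost z w P Q :=
  csInf_le ⟨0, by rintro r ⟨Q', -, rfl⟩; exact cCost_nonneg hw Q'⟩ ⟨Q, hQ, rfl⟩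

theorem cCost_anti (hz : 0 < z) (hw : ∀ p ∈ P, 0 ≤ w p) {S Q : Finset (Pt d)}
    (hS : S.Nonempty) (hSQ : S ⊆ Q) : cCost z w P Q ≤ cCost z w P S :=
  sum_le_sum fun p hp => mul_le_mul_of_nonneg_left
    (Real.rpow_le_rpow (sInf_dist_image_nonneg p _)
      (csInf_le_csInf (bddBelow_dist_image p _) ((coe_nonempty.2 hS).image _)
        (Set.image_mono (coe_subset.2 hSQ))) hz.le) (hw p hp)

theorem cCost_le_sum_dist (hz : 0 < z) (hw : ∀ p ∈ P, 0 ≤ w p) {Q : Finset (Pt d)}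
    {g : Pt d → Pt d} (hg : ∀ p ∈ P, g p ∈ Q) :
    cCost z w P Q ≤ ∑ p ∈ P, w p * dist p (g p) ^ z :=
  sum_le_sum fun p hp => mul_le_mul_of_nonneg_left
    (Real.rpow_le_rpow (sInf_dist_image_nonneg p _)
      (csInf_le (bddBelow_dist_image p _) ⟨g p, mem_coe.2 (hg p hp), rfl⟩) hz.le) (hw p hp)

theorem optCost_le_cCost_of_card_le [Infinite (Pt d)] (hz : 0 < z) (hw : ∀ p ∈ P, 0 ≤ w p)
    {S : Finset (Pt d)} {n : ℕ} (hS : S.Nonempty) (hSn : S.card ≤ n) :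
    optCost z w P n ≤ cCost z w P S := by
  obtain ⟨T, hST, hT⟩ := Infinite.exists_superset_card_eq S n hSn
  exact (optCost_le_cCost hw hT).trans (cCost_anti hz hw hS hST)

theorem optCost_le_sum_dist_sub [Infinite (Pt d)] (hz : 0 < z) (hw : ∀ p ∈ P, 0 ≤ w p)
    {C : Finset (Pt d)} {n : ℕ} (hCn : C.card + 1 ≤ n) {h : Pt d → Pt d}
    (hh : ∀ p ∈ P, h p ∈ C) {p₀ : Pt d} (hp₀ : p₀ ∈ P) :
    optCost z w P n ≤ ∑ p ∈ P, w p * dist p (h p) ^ z - w p₀ * dist p₀ (h p₀) ^ z := by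
  have hg : ∀ p ∈ P, Function.update h p₀ p₀ p ∈ insert p₀ C := by
    intro p hp
    rcases eq_or_ne p p₀ with rfl | hne
    · simp
    · simp [hne, hh p hp]
  have hsum : ∑ p ∈ P, w p * dist p (Function.update h p₀ p₀ p) ^ z
      = ∑ p ∈ P, w p * dist p (h p) ^ z - w p₀ * dist p₀ (h p₀) ^ z := by
    rw [← add_sum_erase _ _ hp₀, ← add_sum_erase _ _ hp₀,
      sum_congr rfl fun p hp => by rw [Function.update_of_ne (ne_of_mem_erase hp)]]
    simp [Real.zero_rpow hz.ne']
  calc optCost z w P n ≤ cCost z w P (insert p₀ C) :=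
        optCost_le_cCost_of_card_le hz hw (insert_nonempty _ _)
          ((card_insert_le _ _).trans hCn)
    _ ≤ _ := cCost_le_sum_dist hz hw hg
    _ = _ := hsum

theorem sum_dist_rpow_ite_le {ι : Type*} [DecidableEq ι] (hw : ∀ p ∈ P, 0 ≤ w p) (q : ι → Pt d)
    (f : Pt d → ι) (i : ι) {m : Pt d}
    (hm : cCost z w (P.filter fun p => f p = i) {m} = optCost z w (P.filter fun p => f p = i) 1) :
    ∑ p ∈ P, w p * dist p (if f p = i then m else q (f p)) ^ z
      ≤ ∑ p ∈ P, w p * dist p (q (f p)) ^ z := by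
  rw [← sum_filter_add_sum_filter_not P (fun p => f p = i),
    ← sum_filter_add_sum_filter_not P (fun p => f p = i)]
  gcongr ?_ + ?_
  · have hcluster : ∑ p ∈ P.filter (fun p => f p = i), w p * dist p (q (f p)) ^ z
        = cCost z w (P.filter fun p => f p = i) {q i} := by
      rw [cCost_singleton]
      exact sum_congr rfl fun p hp => by rw [(mem_filter.1 hp).2]
    rw [hcluster, sum_congr rfl fun p hp => by rw [if_pos (mem_filter.1 hp).2],
      ← cCost_singleton, hm]
    exact optCost_le_cCost (fun p hp => hw p (mem_filter.1 hp).1) (card_singleton _)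
  · exact (sum_congr rfl fun p hp => by rw [if_neg (mem_filter.1 hp).2]).le

theorem weight_mul_dist_rpow_le_cCost_sub_optCost [Infinite (Pt d)] (hz : 0 < z)
    (hw : ∀ p ∈ P, 0 ≤ w p) {ι : Type*} [Fintype ι] [DecidableEq ι] {n : ℕ}
    (hn : Fintype.card ι + 1 ≤ n) (q : ι → Pt d) (f : Pt d → ι)
    (hf : ∀ p ∈ P, dist p (q (f p)) = sInf ((fun c => dist p c) '' (univ.image q : Set (Pt d))))
    {p₀ : Pt d} (hp₀ : p₀ ∈ P) {m : Pt d}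
    (hm : cCost z w (P.filter fun p => f p = f p₀) {m}
      = optCost z w (P.filter fun p => f p = f p₀) 1) :
    w p₀ * dist p₀ m ^ z ≤ cCost z w P (univ.image q) - optCost z w P n := by
  set i := f p₀
  set C := insert m ((univ.erase i).image q)
  have hC : C.card + 1 ≤ n := by
    have h1 : C.card ≤ _ := card_insert_le m ((univ.erase i).image q)
    have h2 := card_image_le (s := univ.erase i) (f := q)
    have h3 := card_erase_of_mem (mem_univ i)
    have h4 := Fintype.card_pos_iff.2 ⟨i⟩
    rw [card_univ] at h3
    omega
  have hh : ∀ p ∈ P, (if f p = i then m else q (f p)) ∈ C := by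
    intro p _
    split_ifs with hfp
    · exact mem_insert_self _ _
    · exact mem_insert_of_mem (mem_image_of_mem q (mem_erase.2 ⟨hfp, mem_univ _⟩))
  have hsave := optCost_le_sum_dist_sub hz hw hC hh hp₀
  rw [if_pos rfl] at hsave
  have hcost : cCost z w P (univ.image q) = ∑ p ∈ P, w p * dist p (q (f p)) ^ z :=
    sum_congr rfl fun p hp => by rw [← hf p hp]
  linarith [sum_dist_rpow_ite_le hw q f i hm]

theorem dist_le_of_cCost_sub_optCost_le (hz : 0 < z) (hP : P.Nonempty) (hw : ∀ p ∈ P, 0 < w p)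
    {ι : Type*} [Fintype ι] [DecidableEq ι] {n : ℕ} (hn : Fintype.card ι + 1 ≤ n)
    (q : ι → Pt d) (f : Pt d → ι)
    (hf : ∀ p ∈ P, dist p (q (f p)) = sInf ((fun c => dist p c) '' (univ.image q : Set (Pt d))))
    {p₀ : Pt d} (hp₀ : p₀ ∈ P) {m : Pt d}
    (hm : cCost z w (P.filter fun p => f p = f p₀) {m}
      = optCost z w (P.filter fun p => f p = f p₀) 1)
    {r : ℝ} (hr : 0 ≤ r)
    (hgap : cCost z w P (univ.image q) - optCost z w P n ≤ P.inf' hP w * r ^ z) :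
    dist p₀ m ≤ r := by
  rcases eq_or_ne p₀ m with rfl | hne
  · simpa using hr
  -- Sets of exactly `n` centers must exist; `p₀ ≠ m` makes `Pt d` nontrivial, hence infinite.
  have : Nontrivial (Pt d) := nontrivial_of_ne _ _ hne
  have : Infinite (Pt d) := Module.Free.infinite ℝ (Pt d)
  have hsave := weight_mul_dist_rpow_le_cCost_sub_optCost hz (fun p hp => (hw p hp).le) hn q f hf
    hp₀ hm
  have hwmin : 0 < P.inf' hP w := (lt_inf'_iff hP).2 hw
  have hD : P.inf' hP w * dist p₀ m ^ z ≤ w p₀ * dist p₀ m ^ z :=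
    mul_le_mul_of_nonneg_right (inf'_le w hp₀) (Real.rpow_nonneg dist_nonneg z)
  have hpow : dist p₀ m ^ z ≤ r ^ z := le_of_mul_le_mul_left (by linarith) hwmin
  exact (Real.rpow_le_rpow_iff dist_nonneg hr hz).1 hpow

end Clustering

theorem theorem1_general {d : ℕ} (z : ℝ) (hz : 0 < z)
    (P : Finset (Pt d)) (hP : P.Nonempty)
    (w : Pt d → ℝ) (hw : ∀ p ∈ P, 0 < w p)
    (ε ρ : ℝ) (hε : 0 < ε) (hρ : 0 < ρ)
    (k : ℕ) (hk : 0 < k)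
    (q : Fin k → Pt d)
    (hQopt : cCost z w P (Finset.univ.image q) = optCost z w P k)
    (f : Pt d → Fin k)
    (hfmin : ∀ p ∈ P, dist p (q (f p))
        = sInf ((fun c => dist p c) '' ((Finset.univ.image q : Finset (Pt d)) : Set (Pt d))))
    (Pc : Fin k → Finset (Pt d)) (hPc : ∀ i, Pc i = P.filter fun p => f p = i)
    (hne : ∀ i, (Pc i).Nonempty)
    (μ : Fin k → Pt d) (hμ : ∀ i, cCost z w (Pc i) {μ i} = optCost z w (Pc i) 1)
    (hgap : optCost z w P k - optCost z w P (2 * k) ≤ P.inf' hP w * (ε / ρ) ^ z)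
    (X : Type*) (cost : Pt d → X → ℝ)
    (hc1 : ∀ p x, 1 ≤ cost p x)
    (hlip : ∀ (x : X) (p p' : Pt d), |cost p x - cost p' x| ≤ ρ * dist p p') :
    ∀ x : X,
      ((1 - ε) * (∑ p ∈ P, w p * cost p x) ≤ (∑ i, (∑ p ∈ Pc i, w p) * cost (μ i) x) ∧
       (∑ i, (∑ p ∈ Pc i, w p) * cost (μ i) x) ≤ (1 + ε) * (∑ p ∈ P, w p * cost p x)) ∧
      ((1 - ε) * P.sup' hP (fun p => cost p x)
          ≤ Finset.univ.sup' (Finset.univ_nonempty_iff.mpr ⟨⟨0, hk⟩⟩) (fun i => cost (μ i) x) ∧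
       Finset.univ.sup' (Finset.univ_nonempty_iff.mpr ⟨⟨0, hk⟩⟩) (fun i => cost (μ i) x)
          ≤ (1 + ε) * P.sup' hP (fun p => cost p x)) := by
  intro x
  have hμ' : ∀ i, cCost z w (P.filter fun p => f p = i) {μ i}
      = optCost z w (P.filter fun p => f p = i) 1 := fun i => hPc i ▸ hμ i
  have hclose : ∀ p ∈ P, dist p (μ (f p)) ≤ ε / ρ := fun p hp =>
    dist_le_of_cCost_sub_optCost_le hz hP hw (n := 2 * k) (by simp; omega) q f hfmin hp
      (hμ' (f p)) (by positivity) (by rwa [hQopt])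
  have happrox : ∀ p ∈ P, RelApprox ε (cost p x) (cost (μ (f p)) x) := fun p hp =>
    RelApprox.of_abs_sub_le (hc1 p x) hε.le <| (hlip x p _).trans <|
      calc ρ * dist p (μ (f p)) ≤ ρ * (ε / ρ) := mul_le_mul_of_nonneg_left (hclose p hp) hρ.le
        _ = ε := mul_div_cancel₀ ε hρ.ne'
  refine ⟨?_, RelApprox.sup' hP _ (fun p _ => mem_univ (f p)) (fun i _ => ?_) (by linarith) happrox⟩
  · simp only [hPc, sum_sum_filter_mul]
    exact RelApprox.sum (fun p hp => (hw p hp).le) happrox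
  · obtain ⟨p, hp⟩ := hne i
    rw [hPc, mem_filter] at hp
    exact ⟨p, hp.1, hp.2⟩

/-- Theorem 1: if the optimal `k`-clustering centers `q i` of `P` (with induced partition
`Pc i` of points whose closest center is `q i`, all nonempty, and optimal 1-clustering
centers `μ i` of the clusters) satisfy `opt(P,k) − opt(P,2k) ≤ w_min·(ε/ρ)^z`, then for
every model set `X` and every per-point cost that is `≥ 1` and `ρ`-Lipschitz in the point,
`{μ i}` with weights `Σ_{p∈Pc i} w_p` is an `ε`-coreset for `P` w.r.t. the sum cost, and an
`ε`-coreset w.r.t. the maximum cost. -/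
theorem theorem1 {d : ℕ} (z : ℝ) (hz : 0 < z)
    (P : Finset (Pt d)) (hP : P.Nonempty)
    (w : Pt d → ℝ) (hw : ∀ p ∈ P, 0 < w p)
    (ε ρ : ℝ) (hε : 0 < ε) (hρ : 0 < ρ)
    (k : ℕ) (hk : 0 < k)
    (q : Fin k → Pt d) (hq : Function.Injective q)
    (hQopt : cCost z w P (Finset.univ.image q) = optCost z w P k)
    (f : Pt d → Fin k)
    (hfmin : ∀ p ∈ P, dist p (q (f p))
        = sInf ((fun c => dist p c) '' ((Finset.univ.image q : Finset (Pt d)) : Set (Pt d))))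
    (Pc : Fin k → Finset (Pt d)) (hPc : ∀ i, Pc i = P.filter fun p => f p = i)
    (hne : ∀ i, (Pc i).Nonempty)
    (μ : Fin k → Pt d) (hμ : ∀ i, cCost z w (Pc i) {μ i} = optCost z w (Pc i) 1)
    (hgap : optCost z w P k - optCost z w P (2 * k) ≤ P.inf' hP w * (ε / ρ) ^ z)
    (X : Type*) (cost : Pt d → X → ℝ)
    (hc1 : ∀ p x, 1 ≤ cost p x)
    (hlip : ∀ (x : X) (p p' : Pt d), |cost p x - cost p' x| ≤ ρ * dist p p') :
    ∀ x : X,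
      ((1 - ε) * (∑ p ∈ P, w p * cost p x) ≤ (∑ i, (∑ p ∈ Pc i, w p) * cost (μ i) x) ∧
       (∑ i, (∑ p ∈ Pc i, w p) * cost (μ i) x) ≤ (1 + ε) * (∑ p ∈ P, w p * cost p x)) ∧
      ((1 - ε) * P.sup' hP (fun p => cost p x)
          ≤ Finset.univ.sup' (Finset.univ_nonempty_iff.mpr ⟨⟨0, hk⟩⟩) (fun i => cost (μ i) x) ∧
       Finset.univ.sup' (Finset.univ_nonempty_iff.mpr ⟨⟨0, hk⟩⟩) (fun i => cost (μ i) x)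
          ≤ (1 + ε) * P.sup' hP (fun p => cost p x)) :=
  theorem1_general z hz P hP w hw ε ρ hε hρ k hk q hQopt f hfmin Pc hPc hne μ hμ hgap X cost hc1
    hlip
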